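/- arXiv:1611.04412 — 6 statements merged into one kernel-verified Lean document; each statement's English description precedes it below -/
import Mathlib

section
/- Let A ⊆ R ⊆ S be commutative Noetherian rings, let ι : R → S denote the inclusion, and let β : S → R be any R-linear map. Then for every A-linear differential operator δ on S of order at most n (δ ∈ Dⁿ_{S|A}), the composite β∘δ∘ι : R → R is an A-linear differential operator on R of order at most n (β∘δ|_R ∈ Dⁿ_{R|A}). -/
/-! Restriction commutes with taking commutators against elements of `R`, because `β` is
`R`-linear: `β (δ (r x)) - r β (δ x) = β ([δ, r] x)`. It also sends multiplication by `s ∈ S`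
to multiplication by `β s`. Induction on the order then gives the theorem. -/

/-- `δ` is an `A`-linear differential operator on `R` of order at most `n`:
order-zero operators are multiplications by elements of `R`, and `δ` has order
at most `n+1` if all commutators `[δ, r] = δ∘(r·) − (r·)∘δ` have order at most `n`. -/
def IsDiffOpOfOrder (A : Type*) {R : Type*} [CommRing A] [CommRing R] [Algebra A R] :
    ℕ → (R →ₗ[A] R) → Prop
  | 0 => fun δ => ∃ r : R, ∀ x, δ x = r * x
  | (n+1) => fun δ => ∀ r : R,
      IsDiffOpOfOrder A n (δ ∘ₗ LinearMap.mulLeft A r - LinearMap.mulLeft A r ∘ₗ δ)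

/-- The restriction `β ∘ δ|_R : R → R` of an operator `δ : S → S` along the inclusion
`R ⊆ S` and an `R`-linear map `β : S → R`. -/
def restrictOp (A R S : Type*) [CommRing A] [CommRing R] [CommRing S]
    [Algebra A R] [Algebra A S] [Algebra R S] [IsScalarTower A R S]
    (β : S →ₗ[R] R) (δ : S →ₗ[A] S) : R →ₗ[A] R :=
  (β.restrictScalars A) ∘ₗ δ ∘ₗ ((IsScalarTower.toAlgHom A R S).toLinearMap)

section

variable {A R S : Type*} [CommRing A] [CommRing R] [CommRing S]
  [Algebra A R] [Algebra A S] [Algebra R S] [IsScalarTower A R S]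

theorem isDiffOpOfOrder_zero_iff {δ : R →ₗ[A] R} :
    IsDiffOpOfOrder A 0 δ ↔ ∃ r : R, δ = LinearMap.mulLeft A r := by
  simp only [IsDiffOpOfOrder, LinearMap.ext_iff, LinearMap.mulLeft_apply]

theorem restrictOp_apply (β : S →ₗ[R] R) (δ : S →ₗ[A] S) (x : R) :
    restrictOp A R S β δ x = β (δ (algebraMap R S x)) :=
  rfl

theorem restrictOp_mulLeft (β : S →ₗ[R] R) (s : S) :
    restrictOp A R S β (LinearMap.mulLeft A s) = LinearMap.mulLeft A (β s) := by
  ext x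
  rw [restrictOp_apply, LinearMap.mulLeft_apply, LinearMap.mulLeft_apply, mul_comm,
    ← Algebra.smul_def, β.map_smul, smul_eq_mul, mul_comm]

theorem restrictOp_commutator (β : S →ₗ[R] R) (δ : S →ₗ[A] S) (r : R) :
    restrictOp A R S β δ ∘ₗ LinearMap.mulLeft A r - LinearMap.mulLeft A r ∘ₗ restrictOp A R S β δ
      = restrictOp A R S β
          (δ ∘ₗ LinearMap.mulLeft A (algebraMap R S r)
            - LinearMap.mulLeft A (algebraMap R S r) ∘ₗ δ) := by
  ext x
  simp only [LinearMap.sub_apply, LinearMap.comp_apply, LinearMap.mulLeft_apply, restrictOp_apply,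
    map_sub, map_mul]
  rw [← Algebra.smul_def r (δ _), β.map_smul, smul_eq_mul]

end

theorem restriction_of_diffOp_along_splitting_general
    (A R S : Type*) [CommRing A] [CommRing R] [CommRing S]
    [Algebra A R] [Algebra A S] [Algebra R S] [IsScalarTower A R S]
    (β : S →ₗ[R] R)
    (n : ℕ) (δ : S →ₗ[A] S) (hδ : IsDiffOpOfOrder A n δ) :
    IsDiffOpOfOrder A n (restrictOp A R S β δ) := by
  induction n generalizing δ with
  | zero =>
    obtain ⟨s, rfl⟩ := isDiffOpOfOrder_zero_iff.mp hδ
    exact isDiffOpOfOrder_zero_iff.mpr ⟨β s, restrictOp_mulLeft β s⟩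
  | succ n ih =>
    intro r
    rw [restrictOp_commutator]
    exact ih _ (hδ (algebraMap R S r))

/-- Lemma `LemmaRestriction`.  Let `A ⊆ R ⊆ S` be commutative
Noetherian rings, `ι : R → S` the inclusion, and `β : S → R` any `R`-linear map.
Then for every `δ ∈ Dⁿ_{S|A}`, the composite `β∘δ∘ι : R → R` lies in `Dⁿ_{R|A}`. -/
theorem restriction_of_diffOp_along_splitting
    (A R S : Type*) [CommRing A] [CommRing R] [CommRing S]
    [IsNoetherianRing A] [IsNoetherianRing R] [IsNoetherianRing S]
    [Algebra A R] [Algebra A S] [Algebra R S] [IsScalarTower A R S]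
    (hAR : Function.Injective (algebraMap A R))
    (hRS : Function.Injective (algebraMap R S))
    (β : S →ₗ[R] R)
    (n : ℕ) (δ : S →ₗ[A] S) (hδ : IsDiffOpOfOrder A n δ) :
    IsDiffOpOfOrder A n (restrictOp A R S β δ) :=
  restriction_of_diffOp_along_splitting_general A R S β n δ hδ
end

section
/- Let A ⊆ R ⊆ S be commutative Noetherian rings such that the inclusion R ⊆ S admits an R-linear splitting β : S → R, and let M ⊆ N be a differential direct summand compatible with β. Then the length of M as a D_{R|A}-module is at most the length of N as a D_{S|A}-module: λ_{D_{R|A}}(M) ≤ λ_{D_{S|A}}(N). -/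
/-- `δ` is an `A`-linear differential operator on `R`. -/
def IsDiffOp (A : Type*) {R : Type*} [CommRing A] [CommRing R] [Algebra A R]
    (δ : R →ₗ[A] R) : Prop :=
  ∃ n, IsDiffOpOfOrder A n δ

/-- A `D_{R|A}`-module structure on an `R`-module `M`. -/
structure DAction (A R : Type*) [CommRing A] [CommRing R] [Algebra A R]
    (M : Type*) [AddCommGroup M] [Module A M] [Module R M] [IsScalarTower A R M] where
  act : (R →ₗ[A] R) → (M →ₗ[A] M)
  act_mulLeft : ∀ (r : R) (m : M), act (LinearMap.mulLeft A r) m = r • m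
  act_add : ∀ δ₁ δ₂, IsDiffOp A δ₁ → IsDiffOp A δ₂ → act (δ₁ + δ₂) = act δ₁ + act δ₂
  act_comp : ∀ δ₁ δ₂, IsDiffOp A δ₁ → IsDiffOp A δ₂ → act (δ₁ ∘ₗ δ₂) = act δ₁ ∘ₗ act δ₂

/-- The tautological `D_{R|A}`-module structure on `R` itself. -/
def tautDAction (A R : Type*) [CommRing A] [CommRing R] [Algebra A R] : DAction A R R where
  act δ := δ
  act_mulLeft r m := by simp [LinearMap.mulLeft_apply, smul_eq_mul]
  act_add _ _ _ _ := rfl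
  act_comp _ _ _ _ := rfl

/-- A differential direct summand `M ⊆ N` compatible with the splitting `β`. -/
structure DiffDirectSummand {A R S : Type*} [CommRing A] [CommRing R] [CommRing S]
    [Algebra A R] [Algebra A S] [Algebra R S] [IsScalarTower A R S]
    (β : S →ₗ[R] R)
    {M : Type*} [AddCommGroup M] [Module A M] [Module R M] [IsScalarTower A R M]
    {N : Type*} [AddCommGroup N] [Module A N] [Module R N] [Module S N]
    [IsScalarTower A S N] [IsScalarTower R S N] [IsScalarTower A R N]
    (actM : DAction A R M) (actN : DAction A S N) where
  incl : M →ₗ[R] N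
  incl_injective : Function.Injective incl
  theta : N →ₗ[R] M
  split : ∀ m : M, theta (incl m) = m
  compat : ∀ (δ : S →ₗ[A] S), IsDiffOp A δ → ∀ m : M,
      theta (actN.act δ (incl m)) = actM.act (restrictOp A R S β δ) m

/-- `V` is a `D_{R|A}`-submodule of `M`. -/
def DAction.IsDSubmodule {A R : Type*} [CommRing A] [CommRing R] [Algebra A R]
    {M : Type*} [AddCommGroup M] [Module A M] [Module R M] [IsScalarTower A R M]
    (a : DAction A R M) (V : Submodule R M) : Prop :=
  ∀ δ : R →ₗ[A] R, IsDiffOp A δ → ∀ v ∈ V, a.act δ v ∈ V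

/-- The length of `M` as a `D_{R|A}`-module: the supremum of lengths of chains of
`D_{R|A}`-submodules of `M`. -/
noncomputable def dLength {A R : Type*} [CommRing A] [CommRing R] [Algebra A R]
    {M : Type*} [AddCommGroup M] [Module A M] [Module R M] [IsScalarTower A R M]
    (a : DAction A R M) : WithBot ℕ∞ :=
  Order.krullDim {V : Submodule R M // a.IsDSubmodule V}

/-- The canonical (localized) `D`-module structure on a localization: the one making
the localization map equivariant. -/
def IsLocalizedDAction {A R : Type*} [CommRing A] [CommRing R] [Algebra A R]
    {M Mf : Type*} [AddCommGroup M] [Module A M] [Module R M] [IsScalarTower A R M]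
    [AddCommGroup Mf] [Module A Mf] [Module R Mf] [IsScalarTower A R Mf]
    (ℓ : M →ₗ[R] Mf) (a : DAction A R M) (a' : DAction A R Mf) : Prop :=
  ∀ δ : R →ₗ[A] R, IsDiffOp A δ → ∀ m : M, a'.act δ (ℓ m) = ℓ (a.act δ m)

/-- A morphism of differential direct summands. -/
structure IsDDSHom {A R S : Type*} [CommRing A] [CommRing R] [CommRing S]
    [Algebra A R] [Algebra A S] [Algebra R S] [IsScalarTower A R S]
    {β : S →ₗ[R] R}
    {M₁ : Type*} [AddCommGroup M₁] [Module A M₁] [Module R M₁] [IsScalarTower A R M₁]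
    {N₁ : Type*} [AddCommGroup N₁] [Module A N₁] [Module R N₁] [Module S N₁]
    [IsScalarTower A S N₁] [IsScalarTower R S N₁] [IsScalarTower A R N₁]
    {M₂ : Type*} [AddCommGroup M₂] [Module A M₂] [Module R M₂] [IsScalarTower A R M₂]
    {N₂ : Type*} [AddCommGroup N₂] [Module A N₂] [Module R N₂] [Module S N₂]
    [IsScalarTower A S N₂] [IsScalarTower R S N₂] [IsScalarTower A R N₂]
    {actM₁ : DAction A R M₁} {actN₁ : DAction A S N₁}
    {actM₂ : DAction A R M₂} {actN₂ : DAction A S N₂}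
    (dds₁ : DiffDirectSummand β actM₁ actN₁) (dds₂ : DiffDirectSummand β actM₂ actN₂)
    (φ : N₁ →ₗ[S] N₂) (ψ : M₁ →ₗ[R] M₂) : Prop where
  comm_incl : ∀ m : M₁, φ (dds₁.incl m) = dds₂.incl (ψ m)
  equivN : ∀ δ : S →ₗ[A] S, IsDiffOp A δ → ∀ x : N₁, φ (actN₁.act δ x) = actN₂.act δ (φ x)
  equivM : ∀ δ : R →ₗ[A] R, IsDiffOp A δ → ∀ m : M₁, ψ (actM₁.act δ m) = actM₂.act δ (ψ m)
  comm_theta : ∀ x : N₁, ψ (dds₁.theta x) = dds₂.theta (φ x)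

def commutatorMulLeft {A R : Type*} [CommRing A] [CommRing R] [Algebra A R]
    (δ : R →ₗ[A] R) (r : R) : R →ₗ[A] R :=
  δ ∘ₗ LinearMap.mulLeft A r - LinearMap.mulLeft A r ∘ₗ δ

section DiffOp

variable {A R : Type*} [CommRing A] [CommRing R] [Algebra A R]

theorem isDiffOpOfOrder_succ_iff {n : ℕ} {δ : R →ₗ[A] R} :
    IsDiffOpOfOrder A (n + 1) δ ↔ ∀ r, IsDiffOpOfOrder A n (commutatorMulLeft δ r) :=
  Iff.rfl

theorem commutatorMulLeft_add (δ₁ δ₂ : R →ₗ[A] R) (r : R) :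
    commutatorMulLeft (δ₁ + δ₂) r = commutatorMulLeft δ₁ r + commutatorMulLeft δ₂ r := by
  ext x
  simp only [commutatorMulLeft, LinearMap.sub_apply, LinearMap.add_apply, LinearMap.comp_apply,
    LinearMap.mulLeft_apply, mul_add]
  abel

theorem commutatorMulLeft_comp (δ₁ δ₂ : R →ₗ[A] R) (r : R) :
    commutatorMulLeft (δ₁ ∘ₗ δ₂) r =
      commutatorMulLeft δ₁ r ∘ₗ δ₂ + δ₁ ∘ₗ commutatorMulLeft δ₂ r := by
  ext x
  simp only [commutatorMulLeft, LinearMap.sub_apply, LinearMap.add_apply, LinearMap.comp_apply,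
    LinearMap.mulLeft_apply, map_sub]
  abel

theorem IsDiffOpOfOrder.commutatorMulLeft_eq_zero {δ : R →ₗ[A] R}
    (h : IsDiffOpOfOrder A 0 δ) (r : R) : commutatorMulLeft δ r = 0 := by
  obtain ⟨c, hc⟩ := h
  ext x
  simp only [commutatorMulLeft, LinearMap.sub_apply, LinearMap.comp_apply,
    LinearMap.mulLeft_apply, hc, LinearMap.zero_apply]
  ring

theorem IsDiffOpOfOrder.add {n : ℕ} {δ₁ δ₂ : R →ₗ[A] R} (h₁ : IsDiffOpOfOrder A n δ₁)
    (h₂ : IsDiffOpOfOrder A n δ₂) : IsDiffOpOfOrder A n (δ₁ + δ₂) := by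
  induction n generalizing δ₁ δ₂ with
  | zero =>
    obtain ⟨c₁, hc₁⟩ := h₁
    obtain ⟨c₂, hc₂⟩ := h₂
    exact ⟨c₁ + c₂, fun x => by simp [hc₁, hc₂, add_mul]⟩
  | succ n ih =>
    refine isDiffOpOfOrder_succ_iff.2 fun r => ?_
    rw [commutatorMulLeft_add]
    exact ih (h₁ r) (h₂ r)

theorem IsDiffOpOfOrder.comp : ∀ {m n : ℕ} {δ₁ δ₂ : R →ₗ[A] R},
    IsDiffOpOfOrder A m δ₁ → IsDiffOpOfOrder A n δ₂ → IsDiffOpOfOrder A (m + n) (δ₁ ∘ₗ δ₂)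
  | 0, 0, _, _, ⟨c₁, hc₁⟩, ⟨c₂, hc₂⟩ => ⟨c₁ * c₂, fun x => by simp [hc₁, hc₂, mul_assoc]⟩
  | m + 1, 0, _, _, h₁, h₂ => isDiffOpOfOrder_succ_iff.2 fun r => by
    rw [commutatorMulLeft_comp, h₂.commutatorMulLeft_eq_zero, LinearMap.comp_zero, add_zero]
    exact (h₁ r).comp h₂
  | 0, n + 1, _, _, h₁, h₂ => isDiffOpOfOrder_succ_iff.2 fun r => by
    rw [commutatorMulLeft_comp, h₁.commutatorMulLeft_eq_zero, LinearMap.zero_comp, zero_add]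
    exact h₁.comp (h₂ r)
  | m + 1, n + 1, _, _, h₁, h₂ => isDiffOpOfOrder_succ_iff.2 fun r => by
    rw [commutatorMulLeft_comp]
    have hmn : m + (n + 1) = m + 1 + n := by omega
    exact (hmn ▸ (h₁ r).comp h₂).add (h₁.comp (h₂ r))

theorem isDiffOp_mulLeft (r : R) : IsDiffOp A (LinearMap.mulLeft A r) :=
  ⟨0, r, fun _ => rfl⟩

theorem IsDiffOp.comp {δ₁ δ₂ : R →ₗ[A] R} (h₁ : IsDiffOp A δ₁) (h₂ : IsDiffOp A δ₂) :
    IsDiffOp A (δ₁ ∘ₗ δ₂) :=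
  let ⟨_, h₁⟩ := h₁
  let ⟨_, h₂⟩ := h₂
  ⟨_, h₁.comp h₂⟩

variable {S : Type*} [CommRing S] [Algebra A S] [Algebra R S] [IsScalarTower A R S]

theorem commutatorMulLeft_restrictOp (β : S →ₗ[R] R) (δ : S →ₗ[A] S) (r : R) :
    commutatorMulLeft (restrictOp A R S β δ) r =
      restrictOp A R S β (commutatorMulLeft δ (algebraMap R S r)) := by
  ext x
  show β (δ (algebraMap R S (r * x))) - r * β (δ (algebraMap R S x))
    = β (δ (algebraMap R S r * algebraMap R S x) - algebraMap R S r * δ (algebraMap R S x))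
  rw [map_sub, map_mul, ← Algebra.smul_def r (δ _), β.map_smul, smul_eq_mul]

theorem IsDiffOpOfOrder.restrictOp (β : S →ₗ[R] R) {n : ℕ} {δ : S →ₗ[A] S}
    (h : IsDiffOpOfOrder A n δ) : IsDiffOpOfOrder A n (restrictOp A R S β δ) := by
  induction n generalizing δ with
  | zero =>
    obtain ⟨c, hc⟩ := h
    refine ⟨β c, fun x => ?_⟩
    show β (δ (algebraMap R S x)) = β c * x
    rw [hc, mul_comm, ← Algebra.smul_def, map_smul, smul_eq_mul, mul_comm]
  | succ n ih =>
    refine isDiffOpOfOrder_succ_iff.2 fun r => ?_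
    rw [commutatorMulLeft_restrictOp]
    exact ih (h (algebraMap R S r))

theorem IsDiffOp.restrictOp (β : S →ₗ[R] R) {δ : S →ₗ[A] S} (h : IsDiffOp A δ) :
    IsDiffOp A (restrictOp A R S β δ) :=
  let ⟨n, h⟩ := h
  ⟨n, h.restrictOp β⟩

end DiffOp

namespace DAction

variable {A R M : Type*} [CommRing A] [CommRing R] [Algebra A R]
  [AddCommGroup M] [Module A M] [Module R M] [IsScalarTower A R M] (a : DAction A R M)

theorem act_mulLeft_one (x : M) : a.act (LinearMap.mulLeft A 1) x = x := by
  rw [a.act_mulLeft, one_smul]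

def orbit (s : Set M) : Set M :=
  {x | ∃ δ, IsDiffOp A δ ∧ ∃ y ∈ s, a.act δ y = x}

def dSpan (s : Set M) : Submodule R M :=
  Submodule.span R (a.orbit s)

theorem subset_orbit (s : Set M) : s ⊆ a.orbit s :=
  fun y hy => ⟨_, isDiffOp_mulLeft 1, y, hy, a.act_mulLeft_one y⟩

theorem orbit_mono {s t : Set M} (h : s ⊆ t) : a.orbit s ⊆ a.orbit t :=
  fun _ ⟨δ, hδ, y, hy, hx⟩ => ⟨δ, hδ, y, h hy, hx⟩

theorem dSpan_mono {s t : Set M} (h : s ⊆ t) : a.dSpan s ≤ a.dSpan t :=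
  Submodule.span_mono (a.orbit_mono h)

theorem subset_dSpan (s : Set M) : s ⊆ a.dSpan s :=
  (a.subset_orbit s).trans Submodule.subset_span

theorem act_mem_orbit {s : Set M} {δ : R →ₗ[A] R} (hδ : IsDiffOp A δ) {x : M}
    (hx : x ∈ a.orbit s) : a.act δ x ∈ a.orbit s := by
  obtain ⟨δ', hδ', y, hy, rfl⟩ := hx
  exact ⟨δ ∘ₗ δ', hδ.comp hδ', y, hy, by rw [a.act_comp _ _ hδ hδ']; rfl⟩

/-- Since `r • δ • y = (r ∘ δ) • y`, no `R`-multiples are needed to generate `D • s`. -/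
theorem act_mem_addClosure_orbit {s : Set M} {x : M} (hx : x ∈ a.dSpan s)
    {δ : R →ₗ[A] R} (hδ : IsDiffOp A δ) : a.act δ x ∈ AddSubmonoid.closure (a.orbit s) := by
  induction hx using Submodule.span_induction generalizing δ with
  | mem y hy => exact AddSubmonoid.subset_closure (a.act_mem_orbit hδ hy)
  | zero => rw [map_zero]; exact zero_mem _
  | add y z _ _ hy hz => rw [map_add]; exact add_mem (hy hδ) (hz hδ)
  | smul r y _ hy =>
    rw [← a.act_mulLeft, ← LinearMap.comp_apply, ← a.act_comp _ _ hδ (isDiffOp_mulLeft r)]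
    exact hy (hδ.comp (isDiffOp_mulLeft r))

theorem dSpan_subset_addClosure_orbit (s : Set M) :
    (a.dSpan s : Set M) ⊆ AddSubmonoid.closure (a.orbit s) := fun x hx =>
  a.act_mulLeft_one x ▸ a.act_mem_addClosure_orbit hx (isDiffOp_mulLeft 1)

theorem isDSubmodule_dSpan (s : Set M) : a.IsDSubmodule (a.dSpan s) := fun _ hδ _ hx =>
  AddSubmonoid.closure_le (S := (a.dSpan s).toAddSubmonoid) |>.2 Submodule.subset_span
    (a.act_mem_addClosure_orbit hx hδ)

end DAction

namespace DiffDirectSummand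

variable {A R S : Type*} [CommRing A] [CommRing R] [CommRing S]
  [Algebra A R] [Algebra A S] [Algebra R S] [IsScalarTower A R S] {β : S →ₗ[R] R}
  {M : Type*} [AddCommGroup M] [Module A M] [Module R M] [IsScalarTower A R M]
  {N : Type*} [AddCommGroup N] [Module A N] [Module R N] [Module S N]
  [IsScalarTower A S N] [IsScalarTower R S N] [IsScalarTower A R N]
  {actM : DAction A R M} {actN : DAction A S N} (dds : DiffDirectSummand β actM actN)

theorem theta_mem_of_mem_dSpan {V : Submodule R M} (hV : actM.IsDSubmodule V) {x : N}
    (hx : x ∈ actN.dSpan (dds.incl '' V)) : dds.theta x ∈ V := by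
  have hclosure : AddSubmonoid.closure (actN.orbit (dds.incl '' V)) ≤
      V.toAddSubmonoid.comap dds.theta.toAddMonoidHom := by
    rw [AddSubmonoid.closure_le]
    rintro _ ⟨δ, hδ, _, ⟨v, hv, rfl⟩, rfl⟩
    show dds.theta _ ∈ V
    rw [dds.compat δ hδ]
    exact hV _ (hδ.restrictOp β) v hv
  exact hclosure (actN.dSpan_subset_addClosure_orbit _ hx)

theorem dSpan_image_incl_le_iff {V W : Submodule R M} (hW : actM.IsDSubmodule W) :
    actN.dSpan (dds.incl '' V) ≤ actN.dSpan (dds.incl '' W) ↔ V ≤ W := by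
  refine ⟨fun h v hv => ?_, fun h => actN.dSpan_mono (Set.image_mono h)⟩
  have hmem := h (actN.subset_dSpan _ ⟨v, hv, rfl⟩)
  simpa only [dds.split] using dds.theta_mem_of_mem_dSpan hW hmem

def extend (V : {V : Submodule R M // actM.IsDSubmodule V}) :
    {W : Submodule S N // actN.IsDSubmodule W} :=
  ⟨actN.dSpan (dds.incl '' V.1), actN.isDSubmodule_dSpan _⟩

theorem extend_strictMono : StrictMono dds.extend :=
  strictMono_of_le_iff_le fun _ W => (dds.dSpan_image_incl_le_iff W.2).symm

end DiffDirectSummand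

theorem dLength_le_of_diffDirectSummand_general
    (A R S : Type*) [CommRing A] [CommRing R] [CommRing S]
    [Algebra A R] [Algebra A S] [Algebra R S] [IsScalarTower A R S]
    (β : S →ₗ[R] R)
    (M : Type*) [AddCommGroup M] [Module A M] [Module R M] [IsScalarTower A R M]
    (N : Type*) [AddCommGroup N] [Module A N] [Module R N] [Module S N]
    [IsScalarTower A S N] [IsScalarTower R S N] [IsScalarTower A R N]
    (actM : DAction A R M) (actN : DAction A S N)
    (dds : DiffDirectSummand β actM actN) :
    dLength actM ≤ dLength actN :=
  Order.krullDim_le_of_strictMono dds.extend dds.extend_strictMono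

/-- Proposition `PropFinLenght`.  Let `A ⊆ R ⊆ S` be Noetherian rings
such that the inclusion `R ⊆ S` has an `R`-linear splitting `β`, and let `M ⊆ N` be a
differential direct summand compatible with `β`.  Then
`λ_{D_{R|A}}(M) ≤ λ_{D_{S|A}}(N)`. -/
theorem dLength_le_of_diffDirectSummand
    (A R S : Type*) [CommRing A] [CommRing R] [CommRing S]
    [IsNoetherianRing A] [IsNoetherianRing R] [IsNoetherianRing S]
    [Algebra A R] [Algebra A S] [Algebra R S] [IsScalarTower A R S]
    (hAR : Function.Injective (algebraMap A R))
    (hRS : Function.Injective (algebraMap R S))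
    (β : S →ₗ[R] R) (hβ : ∀ r : R, β (algebraMap R S r) = r)
    (M : Type*) [AddCommGroup M] [Module A M] [Module R M] [IsScalarTower A R M]
    (N : Type*) [AddCommGroup N] [Module A N] [Module R N] [Module S N]
    [IsScalarTower A S N] [IsScalarTower R S N] [IsScalarTower A R N]
    (actM : DAction A R M) (actN : DAction A S N)
    (dds : DiffDirectSummand β actM actN) :
    dLength actM ≤ dLength actN :=
  dLength_le_of_diffDirectSummand_general A R S β M N actM actN dds
end

section
/- Let S be a regular F-finite domain of prime characteristic p, and let R ⊆ S be an F-finite Noetherian subring such that the inclusion R ⊆ S admits an R-linear splitting β : S → R. Then for every ideal I ⊆ R and every real number λ > 0, one has τ_S((IS)^λ) ∩ R ⊆ τ_R(I^λ). In particular, fpt_S(IS) ≤ fpt_R(I), where fpt denotes the F-pure threshold fpt(I) := sup{λ > 0 : τ(I^λ) = (1)}. -/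
/-- `δ : R → R` is an `R^{p^e}`-linear (additive) endomorphism of `R`, i.e. an element
of `D^{(e)}_R = Hom_{R^{p^e}}(R, R)`. -/
def IsPeLinearMap (p e : ℕ) {R : Type*} [CommRing R] (δ : R → R) : Prop :=
  (∀ x y, δ (x + y) = δ x + δ y) ∧ ∀ r x, δ (r ^ p ^ e * x) = r ^ p ^ e * δ x

/-- `φ : R → R` is a `p^{-e}`-linear (Cartier) map: `φ` is additive and
`φ(r^{p^e}·x) = r·φ(x)`. -/
def IsCartierMap (p e : ℕ) {R : Type*} [CommRing R] (φ : R → R) : Prop :=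
  (∀ x y, φ (x + y) = φ x + φ y) ∧ ∀ r x, φ (r ^ p ^ e * x) = r * φ x

/-- The ideal `D^{(e)}_R I` generated by the values of `R^{p^e}`-linear endomorphisms
on elements of `I`. -/
def diffOpIdeal (p e : ℕ) {R : Type*} [CommRing R] (I : Ideal R) : Ideal R :=
  Ideal.span {y | ∃ δ : R → R, IsPeLinearMap p e δ ∧ ∃ x ∈ I, y = δ x}

/-- The ideal `C^e_R I` generated by the values of `p^{-e}`-linear maps on elements
of `I`. -/
def cartierIdeal (p e : ℕ) {R : Type*} [CommRing R] (I : Ideal R) : Ideal R :=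
  Ideal.span {y | ∃ φ : R → R, IsCartierMap p e φ ∧ ∃ x ∈ I, y = φ x}

/-- The (big) test ideal `τ_R(I^λ) = ⋃_e C^e_R I^{⌈p^e λ⌉}`. -/
noncomputable def testIdeal (p : ℕ) {R : Type*} [CommRing R] (I : Ideal R) (l : ℝ) :
    Ideal R :=
  ⨆ e : ℕ, cartierIdeal p e (I ^ ⌈(p : ℝ) ^ e * l⌉₊)

/-- `R` is `F`-finite: `R` is a finitely generated module over its subring `R^p`
of `p`-th powers. -/
def IsFFinite (p : ℕ) (R : Type*) [CommRing R] : Prop :=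
  ∃ (n : ℕ) (g : Fin n → R), ∀ x : R, ∃ c : Fin n → R, x = ∑ i, (c i) ^ p * g i

/-- `R` is `F`-pure: for every `e ≥ 1` there is a `p^{-e}`-linear map `γ : R → R`
with `γ(1) = 1`. -/
def IsFPure (p : ℕ) (R : Type*) [CommRing R] : Prop :=
  ∀ e : ℕ, 1 ≤ e → ∃ γ : R → R, IsCartierMap p e γ ∧ γ 1 = 1

/-- Regularity of a Noetherian ring of prime characteristic `p`, via Kunz's theorem:
the Frobenius endomorphism is flat. -/
def IsRegularKunz (p : ℕ) (S : Type*) [CommRing S] : Prop :=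
  ∃ F : S →+* S, (∀ x, F x = x ^ p) ∧ F.Flat

/-- The Frobenius power `𝔞^{[p^e]}` of an ideal. -/
def frobeniusPower (p e : ℕ) {R : Type*} [CommRing R] (a : Ideal R) : Ideal R :=
  Ideal.span ((fun x => x ^ p ^ e) '' (a : Set R))

/-- `ν^𝔞_J(p^e) = max { t | Jᵗ ⊄ 𝔞^{[p^e]} }`. -/
noncomputable def fThresholdNu (p : ℕ) {R : Type*} [CommRing R] (J a : Ideal R)
    (e : ℕ) : ℕ :=
  sSup {t : ℕ | ¬ J ^ t ≤ frobeniusPower p e a}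

/-- The set of `F`-jumping numbers of an ideal `I`. -/
noncomputable def fJumpingNumbers (p : ℕ) {R : Type*} [CommRing R] (I : Ideal R) :
    Set ℝ :=
  {l : ℝ | 0 < l ∧ ∀ ε : ℝ, 0 < ε → testIdeal p I l ≠ testIdeal p I (l - ε)}


open Pointwise in
private lemma span_set_pow {R : Type*} [CommRing R] (s : Set R) (n : ℕ) :
    Ideal.span s ^ n = Ideal.span (s ^ n) := by
  induction n with
  | zero => simp [Ideal.span_one, Ideal.one_eq_top]
  | succ n ih => rw [pow_succ, ih, Ideal.span_mul_span', pow_succ]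

private lemma pow_le_span_pow {R : Type*} [CommRing R] (G : Finset R) (q n : ℕ)
    (hn : G.card * (q - 1) < n) :
    Ideal.span (G : Set R) ^ n ≤ Ideal.span ((fun x => x ^ q) '' (G : Set R)) := by
  classical
  rw [span_set_pow]
  refine Ideal.span_le.2 ?_
  rintro x hx
  rw [Set.mem_pow] at hx
  obtain ⟨f, hf⟩ := hx
  rw [List.prod_ofFn] at hf
  have hmap : ∀ a ∈ (Finset.univ : Finset (Fin n)), ((f a : R)) ∈ G := fun a _ => (f a).2
  have hcard : G.card * (q - 1) < (Finset.univ : Finset (Fin n)).card := by simpa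
  obtain ⟨g, hgG, hg⟩ := Finset.exists_lt_card_fiber_of_mul_lt_card_of_maps_to hmap hcard
  set T := Finset.univ.filter (fun i : Fin n => (f i : R) = g) with hT
  have hq : q ≤ T.card := by omega
  have h1 : ∏ i ∈ T, (f i : R) = g ^ T.card :=
    Finset.prod_eq_pow_card (fun i hi => (Finset.mem_filter.1 hi).2)
  have h2 : x = g ^ q * (g ^ (T.card - q) *
      ∏ i ∈ Finset.univ.filter (fun i : Fin n => ¬ ((f i : R) = g)), (f i : R)) := by
    rw [← hf, ← Finset.prod_filter_mul_prod_filter_not Finset.univ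
      (fun i : Fin n => (f i : R) = g), ← hT, h1, ← mul_assoc, ← pow_add]
    congr 2
    omega
  rw [h2]
  exact Ideal.mul_mem_right _ _ (Ideal.subset_span ⟨g, hgG, rfl⟩)

private lemma cartier_map_zero {p e : ℕ} {R : Type*} [CommRing R] {φ : R → R}
    (h : IsCartierMap p e φ) : φ 0 = 0 := by
  have h0 : φ 0 + φ 0 = φ 0 := by simpa using (h.1 0 0).symm
  exact add_eq_left.mp h0

private lemma cartierIdeal_le_self {p e : ℕ} {R : Type*} [CommRing R] (G : Finset R)
    {n : ℕ} (hn : G.card * (p ^ e - 1) < n) :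
    cartierIdeal p e (Ideal.span (G : Set R) ^ n) ≤ Ideal.span (G : Set R) := by
  have h1 : Ideal.span (G : Set R) ^ n ≤ Ideal.span ((fun x => x ^ p ^ e) '' (G : Set R)) :=
    pow_le_span_pow G (p ^ e) n hn
  refine Ideal.span_le.2 ?_
  rintro y ⟨φ, hφ, x, hx, rfl⟩
  have key : ∀ z ∈ Submodule.span R ((fun x => x ^ p ^ e) '' (G : Set R)),
      ∀ s, φ (s * z) ∈ Ideal.span (G : Set R) := by
    intro z hz
    induction hz using Submodule.span_induction with
    | mem w hw =>
      obtain ⟨g, hg, rfl⟩ := hw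
      intro s
      rw [mul_comm, hφ.2 g s]
      exact Ideal.mul_mem_right _ _ (Ideal.subset_span hg)
    | zero =>
      intro s
      rw [mul_zero, cartier_map_zero hφ]
      exact zero_mem _
    | add a b ha hb iha ihb =>
      intro s
      rw [mul_add, hφ.1]
      exact add_mem (iha s) (ihb s)
    | smul c a ha iha =>
      intro s
      rw [smul_eq_mul, ← mul_assoc]
      exact iha (s * c)
  have := key x (h1 hx) 1
  rwa [one_mul] at this

private lemma testIdeal_le_self {p : ℕ} (hp : 0 < p) {R : Type*} [CommRing R] (G : Finset R)
    {m : ℝ} (hm : (G.card : ℝ) + 1 ≤ m) :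
    testIdeal p (Ideal.span (G : Set R)) m ≤ Ideal.span (G : Set R) := by
  refine iSup_le fun e => cartierIdeal_le_self G ?_
  rw [Nat.lt_ceil]
  have hq1 : 1 ≤ p ^ e := Nat.one_le_pow e p hp
  have hq : (1 : ℝ) ≤ (p : ℝ) ^ e := by exact_mod_cast hq1
  have hμ : (0 : ℝ) ≤ (G.card : ℝ) := Nat.cast_nonneg _
  push_cast [Nat.cast_sub hq1]
  have h2 : (p : ℝ) ^ e * ((G.card : ℝ) + 1) ≤ (p : ℝ) ^ e * m :=
    mul_le_mul_of_nonneg_left hm (by linarith)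
  nlinarith

private lemma testIdeal_top {p : ℕ} {R : Type*} [CommRing R] (m : ℝ) :
    testIdeal p (⊤ : Ideal R) m = ⊤ := by
  rw [eq_top_iff]
  intro x _
  refine Submodule.mem_iSup_of_mem 0 ?_
  refine Ideal.subset_span ⟨id, ⟨fun a b => rfl, fun r y => by simp⟩, x, ?_, rfl⟩
  simp [Ideal.top_pow]

private lemma beta_cartier {p e : ℕ} {R S : Type*} [CommRing R] [CommRing S] [Algebra R S]
    (β : S →ₗ[R] R) (J : Ideal R) :
    ∀ u ∈ cartierIdeal p e (J.map (algebraMap R S)), β u ∈ cartierIdeal p e J := by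
  have main : ∀ u ∈ cartierIdeal p e (J.map (algebraMap R S)), ∀ s : S,
      β (s * u) ∈ cartierIdeal p e J := by
    intro u hu
    have hu' : u ∈ Submodule.span S
        {y | ∃ φ : S → S, IsCartierMap p e φ ∧ ∃ x ∈ J.map (algebraMap R S), y = φ x} := hu
    clear hu
    induction hu' using Submodule.span_induction with
    | mem w hw =>
      obtain ⟨φ, hφ, x, hx, rfl⟩ := hw
      have inner : ∀ z ∈ Submodule.span S ((algebraMap R S) '' (J : Set R)),
          ∀ s t : S, β (s * φ (t * z)) ∈ cartierIdeal p e J := by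
        intro z hz
        induction hz using Submodule.span_induction with
        | mem w hw =>
          obtain ⟨a, ha, rfl⟩ := hw
          intro s t
          have hψ : IsCartierMap p e (fun r : R => β (s * φ (t * algebraMap R S r))) := by
            constructor
            · intro x y
              dsimp only
              rw [map_add, mul_add, hφ.1, mul_add, map_add]
            · intro r x
              dsimp only
              have h1 : t * algebraMap R S (r ^ p ^ e * x)
                  = (algebraMap R S r) ^ p ^ e * (t * algebraMap R S x) := by
                rw [map_mul, map_pow]; ring
              rw [h1, hφ.2, ← mul_assoc, mul_comm s (algebraMap R S r), mul_assoc,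
                ← Algebra.smul_def, map_smul, smul_eq_mul]
          exact Ideal.subset_span ⟨_, hψ, a, ha, rfl⟩
        | zero =>
          intro s t
          rw [mul_zero, cartier_map_zero hφ, mul_zero, map_zero]
          exact zero_mem _
        | add a b ha hb iha ihb =>
          intro s t
          rw [mul_add, hφ.1, mul_add, map_add]
          exact add_mem (iha s t) (ihb s t)
        | smul c a ha iha =>
          intro s t
          rw [smul_eq_mul, show t * (c * a) = (t * c) * a by ring]
          exact iha s (t * c)
      intro s
      have := inner x hx s 1
      rwa [one_mul] at this
    | zero =>
      intro s
      rw [mul_zero, map_zero]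
      exact zero_mem _
    | add a b ha hb iha ihb =>
      intro s
      rw [mul_add, map_add]
      exact add_mem (iha s) (ihb s)
    | smul c a ha iha =>
      intro s
      rw [smul_eq_mul, ← mul_assoc]
      exact iha (s * c)
  intro u hu
  have := main u hu 1
  rwa [one_mul] at this

private lemma comap_testIdeal_le {p : ℕ} {R S : Type*} [CommRing R] [CommRing S] [Algebra R S]
    (β : S →ₗ[R] R) (hβ : ∀ r : R, β (algebraMap R S r) = r) (I : Ideal R) (l : ℝ) :
    (testIdeal p (I.map (algebraMap R S)) l).comap (algebraMap R S) ≤ testIdeal p I l := by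
  intro z hz
  rw [Ideal.mem_comap] at hz
  have hz' : algebraMap R S z ∈
      ⨆ e : ℕ, cartierIdeal p e ((I.map (algebraMap R S)) ^ ⌈(p : ℝ) ^ e * l⌉₊) := hz
  have h : β (algebraMap R S z) ∈ testIdeal p I l := by
    refine Submodule.iSup_induction
      (motive := fun u : S => β u ∈ testIdeal p I l) _ hz' ?_ ?_ ?_
    · intro e u hu
      rw [← Ideal.map_pow] at hu
      exact Submodule.mem_iSup_of_mem e (beta_cartier β _ u hu)
    · show β (0 : S) ∈ testIdeal p I l
      rw [map_zero]; exact zero_mem _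
    · intro x y hx hy
      show β (x + y) ∈ testIdeal p I l
      rw [map_add]; exact add_mem hx hy
  rwa [hβ z] at h

/-- Let `S` be a regular `F`-finite domain of characteristic `p > 0`
and `R ⊆ S` an `F`-finite Noetherian subring such that the inclusion splits
`R`-linearly.  Then for every ideal `I ⊆ R` and every `λ > 0` one has
`τ_S((IS)^λ) ∩ R ⊆ τ_R(I^λ)`; in particular `fpt_S(IS) ≤ fpt_R(I)`, where
`fpt(I) = sup{λ > 0 : τ(I^λ) = (1)}`. -/
theorem testIdeal_contraction_le
    (p : ℕ) (hp : p.Prime)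
    (S : Type*) [CommRing S] [IsDomain S] [IsNoetherianRing S] [CharP S p]
    (hreg : IsRegularKunz p S) (hFFS : IsFFinite p S)
    (R : Type*) [CommRing R] [IsNoetherianRing R] [CharP R p] (hFFR : IsFFinite p R)
    [Algebra R S] (hRS : Function.Injective (algebraMap R S))
    (β : S →ₗ[R] R) (hβ : ∀ r : R, β (algebraMap R S r) = r)
    (I : Ideal R) (l : ℝ) (hl : 0 < l) :
    (testIdeal p (I.map (algebraMap R S)) l).comap (algebraMap R S) ≤ testIdeal p I l ∧
    sSup {m : ℝ | 0 < m ∧ testIdeal p (I.map (algebraMap R S)) m = ⊤} ≤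
      sSup {m : ℝ | 0 < m ∧ testIdeal p I m = ⊤} := by
  refine ⟨comap_testIdeal_le β hβ I l, ?_⟩
  have hAB : {m : ℝ | 0 < m ∧ testIdeal p (I.map (algebraMap R S)) m = ⊤} ⊆
      {m : ℝ | 0 < m ∧ testIdeal p I m = ⊤} := by
    rintro m ⟨hm0, hmT⟩
    refine ⟨hm0, top_unique ?_⟩
    have h1 : (⊤ : Ideal R) ≤ (testIdeal p (I.map (algebraMap R S)) m).comap (algebraMap R S) := by
      rw [hmT, Ideal.comap_top]
    exact le_trans h1 (comap_testIdeal_le β hβ I m)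
  rcases Set.eq_empty_or_nonempty
      {m : ℝ | 0 < m ∧ testIdeal p (I.map (algebraMap R S)) m = ⊤} with hA | hA
  · rw [hA, Real.sSup_empty]
    exact Real.sSup_nonneg fun x hx => le_of_lt hx.1
  · by_cases hB : BddAbove {m : ℝ | 0 < m ∧ testIdeal p I m = ⊤}
    · exact csSup_le_csSup hB hA hAB
    · rw [Real.sSup_of_not_bddAbove hB]
      obtain ⟨G, hG⟩ := (IsNoetherian.noetherian I : I.FG)
      obtain ⟨m, hmB, hm⟩ := not_bddAbove_iff.1 hB ((G.card : ℝ) + 1)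
      have hI : I = ⊤ := by
        have h1 : testIdeal p I m ≤ I := by
          rw [← hG]
          exact testIdeal_le_self hp.pos G (le_of_lt hm)
        exact top_unique (hmB.2 ▸ h1)
      have hA' : ¬ BddAbove {m : ℝ | 0 < m ∧ testIdeal p (I.map (algebraMap R S)) m = ⊤} := by
        rw [not_bddAbove_iff]
        intro c
        have h0 : (0 : ℝ) ≤ max c 0 := le_max_right c 0
        have hc : c ≤ max c 0 := le_max_left c 0
        refine ⟨max c 0 + 1, ⟨by linarith, ?_⟩, by linarith⟩
        rw [hI, Ideal.map_top]
        exact testIdeal_top _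
      rw [Real.sSup_of_not_bddAbove hA']
end

section
/- Let R be an F-pure, F-finite commutative Noetherian ring of prime characteristic p, let I, 𝔟 ⊆ R be ideals, and let e ≥ 1. If D^{(e)}_R I = D^{(e)}_R 𝔟, then C^e_R I = C^e_R 𝔟. -/
/-!
Every `p^{-e}`-linear map precomposed with an `R^{p^e}`-linear map is again `p^{-e}`-linear, and
`x ↦ φ (r * x)` is `p^{-e}`-linear with `φ`. Hence `φ` sends all of `D^{(e)}_R I` into
`C^e_R I`, so `C^e_R (D^{(e)}_R I) = C^e_R I` for every ideal `I` of every ring: `C^e_R I` depends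
only on `D^{(e)}_R I`.
-/

section

variable {p e : ℕ} {R : Type*} [CommRing R]

lemma isPeLinearMap_id : IsPeLinearMap p e (id : R → R) :=
  ⟨fun _ _ => rfl, fun _ _ => rfl⟩

lemma IsCartierMap.map_zero {φ : R → R} (hφ : IsCartierMap p e φ) : φ 0 = 0 := by
  simpa using hφ.1 0 0

lemma IsCartierMap.comp {φ δ : R → R} (hφ : IsCartierMap p e φ) (hδ : IsPeLinearMap p e δ) :
    IsCartierMap p e (φ ∘ δ) :=
  ⟨fun x y => by simp only [Function.comp_apply, hδ.1, hφ.1],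
    fun r x => by simp only [Function.comp_apply, hδ.2, hφ.2]⟩

lemma IsCartierMap.comp_mul_left {φ : R → R} (hφ : IsCartierMap p e φ) (r : R) :
    IsCartierMap p e (fun x => φ (r * x)) :=
  ⟨fun x y => by simp only [mul_add, hφ.1],
    fun s x => by simp only [mul_left_comm r, hφ.2]⟩

lemma le_diffOpIdeal (I : Ideal R) : I ≤ diffOpIdeal p e I :=
  fun x hx => Ideal.subset_span ⟨id, isPeLinearMap_id, x, hx, rfl⟩

lemma cartierIdeal_mono {I J : Ideal R} (hIJ : I ≤ J) : cartierIdeal p e I ≤ cartierIdeal p e J :=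
  Ideal.span_mono fun _ ⟨φ, hφ, x, hx, hy⟩ => ⟨φ, hφ, x, hIJ hx, hy⟩

lemma IsCartierMap.apply_mem_cartierIdeal {φ : R → R} (hφ : IsCartierMap p e φ) {I : Ideal R}
    {x : R} (hx : x ∈ I) : φ x ∈ cartierIdeal p e I :=
  Ideal.subset_span ⟨φ, hφ, x, hx, rfl⟩

lemma IsCartierMap.apply_mem_cartierIdeal_of_mem_diffOpIdeal {I : Ideal R} {y : R}
    (hy : y ∈ diffOpIdeal p e I) {φ : R → R} (hφ : IsCartierMap p e φ) :
    φ y ∈ cartierIdeal p e I := by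
  induction hy using Submodule.span_induction generalizing φ with
  | mem y hy =>
    obtain ⟨δ, hδ, x, hx, rfl⟩ := hy
    exact (hφ.comp hδ).apply_mem_cartierIdeal hx
  | zero => simp only [hφ.map_zero, zero_mem]
  | add y z _ _ hy hz => simpa only [hφ.1] using add_mem (hy hφ) (hz hφ)
  | smul r y _ hy => exact hy (hφ.comp_mul_left r)

lemma cartierIdeal_diffOpIdeal (I : Ideal R) :
    cartierIdeal p e (diffOpIdeal p e I) = cartierIdeal p e I := by
  refine le_antisymm ?_ (cartierIdeal_mono (le_diffOpIdeal I))
  refine Ideal.span_le.mpr ?_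
  rintro _ ⟨φ, hφ, y, hy, rfl⟩
  exact hφ.apply_mem_cartierIdeal_of_mem_diffOpIdeal hy

end

theorem cartierIdeal_eq_of_diffOpIdeal_eq_general
    (p : ℕ)
    (R : Type*) [CommRing R]
    (I b : Ideal R) (e : ℕ)
    (h : diffOpIdeal p e I = diffOpIdeal p e b) :
    cartierIdeal p e I = cartierIdeal p e b := by
  rw [← cartierIdeal_diffOpIdeal I, h, cartierIdeal_diffOpIdeal]

/-- Lemma `LemmaRestrictionDmodCartier`.  Let `R` be an `F`-pure
`F`-finite Noetherian ring of prime characteristic `p` and `I, 𝔟 ⊆ R` ideals, `e ≥ 1`.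
If `D^{(e)}_R I = D^{(e)}_R 𝔟`, then `C^e_R I = C^e_R 𝔟`. -/
theorem cartierIdeal_eq_of_diffOpIdeal_eq
    (p : ℕ) (hp : p.Prime)
    (R : Type*) [CommRing R] [IsNoetherianRing R] [CharP R p]
    (hFF : IsFFinite p R) (hFP : IsFPure p R)
    (I b : Ideal R) (e : ℕ) (he : 1 ≤ e)
    (h : diffOpIdeal p e I = diffOpIdeal p e b) :
    cartierIdeal p e I = cartierIdeal p e b :=
  cartierIdeal_eq_of_diffOpIdeal_eq_general p R I b e h
end

section
/- Let S be a regular F-finite domain of prime characteristic p, and let R ⊆ S be an F-finite Noetherian subring such that the inclusion R ⊆ S admits an R-linear splitting β : S → R. Let I ⊆ R be an ideal, e ≥ 1, and r, t ∈ ℕ. If C^e_S (IS)^r = C^e_S (IS)^t, then C^e_R I^r = C^e_R I^t. -/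
private theorem auxCartierZero {R : Type*} [CommRing R] {p e : ℕ} {φ : R → R}
    (hφ : IsCartierMap p e φ) : φ 0 = 0 := by
  have h := hφ.1 0 0
  rw [add_zero] at h
  exact (left_eq_add.mp h)

private theorem auxCartierSum {R ι : Type*} [CommRing R] {p e : ℕ} {φ : R → R}
    (hφ : IsCartierMap p e φ) (s : Finset ι) (v : ι → R) :
    φ (∑ i ∈ s, v i) = ∑ i ∈ s, φ (v i) := by
  classical
  induction s using Finset.induction with
  | empty => simpa using auxCartierZero hφ
  | @insert a s ha ih => rw [Finset.sum_insert ha, Finset.sum_insert ha, hφ.1, ih]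

private theorem auxDualBasis {S M ι : Type*} [CommRing S] [IsNoetherianRing S]
    [AddCommGroup M] [Module S M] [Module.Flat S M] [Fintype ι] (G : ι → M)
    (hG : ∀ m : M, ∃ c : ι → S, m = ∑ i, c i • G i) :
    ∃ f : ι → (M →ₗ[S] S), ∀ m : M, ∑ i, f i m • G i = m := by
  let π : (ι → S) →ₗ[S] M :=
    { toFun := fun c => ∑ i, c i • G i
      map_add' := fun c d => by
        simp only [Pi.add_apply, add_smul, Finset.sum_add_distrib]
      map_smul' := fun s c => by
        simp only [Pi.smul_apply, smul_eq_mul, mul_smul, RingHom.id_apply, Finset.smul_sum] }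
  have hsurj : Function.Surjective π := fun m => by
    obtain ⟨c, hc⟩ := hG m
    exact ⟨c, hc.symm⟩
  haveI : Module.Finite S M := Module.Finite.of_surjective π hsurj
  haveI : Module.FinitePresentation S M := Module.finitePresentation_of_finite S M
  haveI : Module.Projective S M := Module.freeLocus_eq_univ_iff.mp Module.freeLocus_eq_univ
  obtain ⟨sec, hsec⟩ := Module.projective_lifting_property π LinearMap.id hsurj
  refine ⟨fun i => (LinearMap.proj i).comp sec, fun m => ?_⟩
  have h1 := LinearMap.congr_fun hsec m
  simpa [π] using h1

private theorem auxFrobPow (p : ℕ) {S : Type*} [CommRing S] (hreg : IsRegularKunz p S)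
    (e : ℕ) : ∃ σ : S →+* S, (∀ x, σ x = x ^ p ^ e) ∧ σ.Flat := by
  obtain ⟨F, hF, hFflat⟩ := hreg
  induction e with
  | zero =>
    refine ⟨1, fun x => by simp, RingHom.Flat.id S⟩
  | succ e ih =>
    obtain ⟨σ, hσ, hσf⟩ := ih
    refine ⟨σ.comp F, fun x => ?_, ?_⟩
    · rw [RingHom.comp_apply, hF, hσ, ← pow_mul, ← pow_succ']
    · haveI := hσf
      haveI := hFflat
      exact RingHom.Flat.comp hFflat hσf

private theorem auxFFinitePow (p : ℕ) (hp : p.Prime) {S : Type*} [CommRing S] [CharP S p]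
    (hFF : IsFFinite p S) :
    ∀ e : ℕ, 1 ≤ e → ∃ (n : ℕ) (g : Fin n → S), ∀ x : S, ∃ c : Fin n → S,
      x = ∑ i, (c i) ^ p ^ e * g i := by
  haveI := Fact.mk hp
  intro e
  induction e with
  | zero => intro h; exact absurd h (by omega)
  | succ e ih =>
    intro _
    rcases Nat.eq_zero_or_pos e with h0 | hpos
    · subst h0
      obtain ⟨n, g, hg⟩ := hFF
      refine ⟨n, g, fun x => ?_⟩
      obtain ⟨c, hc⟩ := hg x
      exact ⟨c, by simpa [pow_one] using hc⟩
    · obtain ⟨n, G, hG⟩ := ih hpos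
      obtain ⟨m, g, hg⟩ := hFF
      have E : Fin n × Fin m ≃ Fin (n * m) := finProdFinEquiv
      refine ⟨n * m, fun k => g (E.symm k).2 ^ p ^ e * G (E.symm k).1, fun x => ?_⟩
      obtain ⟨C, hC⟩ := hG x
      choose d hd using fun i => hg (C i)
      refine ⟨fun k => d (E.symm k).1 (E.symm k).2, ?_⟩
      have step2 : x = ∑ i : Fin n, ∑ j : Fin m,
          d i j ^ p ^ (e + 1) * (g j ^ p ^ e * G i) := by
        rw [hC]
        refine Finset.sum_congr rfl fun i _ => ?_
        rw [hd i, sum_pow_char_pow, Finset.sum_mul]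
        refine Finset.sum_congr rfl fun j _ => ?_
        rw [mul_pow, ← pow_mul, ← pow_succ']
        ring
      let F : Fin n × Fin m → S := fun ij => d ij.1 ij.2 ^ p ^ (e + 1) * (g ij.2 ^ p ^ e * G ij.1)
      show x = ∑ k, F (E.symm k)
      rw [Equiv.sum_comp E.symm F, Fintype.sum_prod_type]
      exact step2

private def FrobModAux (S : Type*) : Type _ := S

private instance {S : Type*} [CommRing S] : CommRing (FrobModAux S) :=
  inferInstanceAs (CommRing S)

private theorem auxCartierDualBasis (p : ℕ) (hp : p.Prime) {S : Type*} [CommRing S]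
    [IsNoetherianRing S] [CharP S p] (hreg : IsRegularKunz p S) (hFFS : IsFFinite p S)
    (e : ℕ) (he : 1 ≤ e) :
    ∃ (n : ℕ) (f : Fin n → S → S) (g : Fin n → S),
      (∀ i, IsCartierMap p e (f i)) ∧ ∀ x : S, x = ∑ i, (f i x) ^ p ^ e * g i := by
  obtain ⟨σ, hσ, hσflat⟩ := auxFrobPow p hreg e
  obtain ⟨n, G, hGen⟩ := auxFFinitePow p hp hFFS e he
  letI alg : Algebra S (FrobModAux S) := σ.toAlgebra
  letI mod : Module S (FrobModAux S) := Algebra.toModule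
  have hf0 : Module.Flat S (FrobModAux S) := hσflat
  haveI hflat : Module.Flat S (FrobModAux S) := hf0
  let emb : S → FrobModAux S := fun x => x
  let G' : Fin n → FrobModAux S := fun i => emb (G i)
  have hG' : ∀ m : FrobModAux S, ∃ c : Fin n → S, m = ∑ i, c i • G' i := by
    intro m
    obtain ⟨c, hc⟩ := hGen (show S from m)
    refine ⟨c, ?_⟩
    have h2 : (show S from m) = ∑ i, σ (c i) * G i := by
      rw [hc]
      exact Finset.sum_congr rfl fun i _ => by rw [hσ]
    exact h2
  obtain ⟨f', hf'⟩ := auxDualBasis (S := S) (M := FrobModAux S) (ι := Fin n) G' hG'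
  refine ⟨n, fun i x => f' i (emb x), G, fun i => ⟨?_, ?_⟩, ?_⟩
  · intro x y
    exact map_add (f' i) (emb x) (emb y)
  · intro r x
    have h1 : emb (r ^ p ^ e * x) = r • emb x := by
      show (r ^ p ^ e * x : S) = σ r * x
      rw [hσ]
    show f' i (emb (r ^ p ^ e * x)) = r * f' i (emb x)
    rw [h1, map_smul]
    rfl
  · intro x
    have h2 := hf' (emb x)
    have h3 : ∑ i, σ (f' i (emb x)) * G i = x := h2
    conv_lhs => rw [← h3]
    refine Finset.sum_congr rfl fun i _ => ?_
    show σ (f' i (emb x)) * G i = f' i (emb x) ^ p ^ e * G i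
    rw [hσ]

private theorem auxDescentInner (p : ℕ) (hp : p.Prime)
    {S : Type*} [CommRing S] [CharP S p]
    {R : Type*} [CommRing R] [CharP R p] [Algebra R S] (β : S →ₗ[R] R)
    (I : Ideal R) (e t : ℕ) :
    ∀ y ∈ Ideal.map (algebraMap R S) (I ^ t), ∀ ψ : S → S, IsCartierMap p e ψ →
      ∀ s : S, ∀ φ : R → R, IsCartierMap p e φ →
      φ (β (s * ψ y ^ p ^ e)) ∈ cartierIdeal p e (I ^ t) := by
  haveI := Fact.mk hp
  have hq : p ^ e ≠ 0 := pow_ne_zero e hp.ne_zero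
  have hβa : ∀ (a : R) (v : S), β (algebraMap R S a * v) = a * β v := fun a v => by
    rw [← Algebra.smul_def, map_smul]; rfl
  intro y hy
  have hy' : y ∈ Ideal.span (⇑(algebraMap R S) '' ((I ^ t : Ideal R) : Set R)) := hy
  refine Submodule.span_induction ?_ ?_ ?_ ?_ hy'
  · rintro _ ⟨z, hz, rfl⟩ ψ hψ s φ hφ
    refine Ideal.subset_span
      ⟨fun w => φ (β (s * ψ (algebraMap R S w) ^ p ^ e)), ⟨?_, ?_⟩, z, hz, rfl⟩
    · intro a b
      show φ (β (s * ψ (algebraMap R S (a + b)) ^ p ^ e)) = _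
      rw [map_add, hψ.1, add_pow_char_pow, mul_add, map_add]
      exact hφ.1 _ _
    · intro a b
      show φ (β (s * ψ (algebraMap R S (a ^ p ^ e * b)) ^ p ^ e)) = _
      have h1 : ψ (algebraMap R S (a ^ p ^ e * b))
          = algebraMap R S a * ψ (algebraMap R S b) := by
        rw [map_mul, map_pow]
        exact hψ.2 _ _
      rw [h1, mul_pow, ← map_pow, mul_left_comm, hβa, hφ.2]
  · intro ψ hψ s φ hφ
    rw [auxCartierZero hψ, zero_pow hq, mul_zero, map_zero, auxCartierZero hφ]
    exact Ideal.zero_mem _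
  · intro a b _ _ iha ihb ψ hψ s φ hφ
    rw [hψ.1, add_pow_char_pow, mul_add, map_add, hφ.1]
    exact Ideal.add_mem _ (iha ψ hψ s φ hφ) (ihb ψ hψ s φ hφ)
  · intro a x _ ihx ψ hψ s φ hφ
    have hψ' : IsCartierMap p e (fun u => ψ (a * u)) :=
      ⟨fun u v => by show ψ (a * (u + v)) = _; rw [mul_add]; exact hψ.1 _ _,
       fun r u => by
        show ψ (a * (r ^ p ^ e * u)) = r * ψ (a * u)
        rw [mul_left_comm]
        exact hψ.2 _ _⟩
    have h2 := ihx (fun u => ψ (a * u)) hψ' s φ hφ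
    show φ (β (s * ψ (a • x) ^ p ^ e)) ∈ cartierIdeal p e (I ^ t)
    rw [smul_eq_mul]
    exact h2

private theorem auxDescent (p : ℕ) (hp : p.Prime)
    {S : Type*} [CommRing S] [CharP S p]
    {R : Type*} [CommRing R] [CharP R p] [Algebra R S] (β : S →ₗ[R] R)
    (I : Ideal R) (e t : ℕ) :
    ∀ c ∈ cartierIdeal p e ((I.map (algebraMap R S)) ^ t), ∀ s : S, ∀ φ : R → R,
      IsCartierMap p e φ → φ (β (s * c ^ p ^ e)) ∈ cartierIdeal p e (I ^ t) := by
  haveI := Fact.mk hp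
  have hq : p ^ e ≠ 0 := pow_ne_zero e hp.ne_zero
  intro c hc
  have hc' : c ∈ Ideal.span {y | ∃ ψ : S → S, IsCartierMap p e ψ ∧
      ∃ x ∈ (I.map (algebraMap R S)) ^ t, y = ψ x} := hc
  refine Submodule.span_induction ?_ ?_ ?_ ?_ hc'
  · rintro _ ⟨ψ, hψ, x, hx, rfl⟩ s φ hφ
    rw [← Ideal.map_pow] at hx
    exact auxDescentInner p hp β I e t x hx ψ hψ s φ hφ
  · intro s φ hφ
    rw [zero_pow hq, mul_zero, map_zero, auxCartierZero hφ]
    exact Ideal.zero_mem _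
  · intro a b _ _ iha ihb s φ hφ
    rw [add_pow_char_pow, mul_add, map_add, hφ.1]
    exact Ideal.add_mem _ (iha s φ hφ) (ihb s φ hφ)
  · intro a x _ ihx s φ hφ
    have heq : s * (a • x) ^ p ^ e = (s * a ^ p ^ e) * x ^ p ^ e := by
      rw [smul_eq_mul, mul_pow]; ring
    rw [heq]
    exact ihx (s * a ^ p ^ e) φ hφ

private theorem auxIncl (p : ℕ) (hp : p.Prime)
    (S : Type*) [CommRing S] [IsNoetherianRing S] [CharP S p]
    (hreg : IsRegularKunz p S) (hFFS : IsFFinite p S)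
    (R : Type*) [CommRing R] [CharP R p]
    [Algebra R S] (β : S →ₗ[R] R) (hβ : ∀ r : R, β (algebraMap R S r) = r)
    (I : Ideal R) (e : ℕ) (he : 1 ≤ e) (r t : ℕ)
    (h : cartierIdeal p e ((I.map (algebraMap R S)) ^ r) =
         cartierIdeal p e ((I.map (algebraMap R S)) ^ t)) :
    cartierIdeal p e (I ^ r) ≤ cartierIdeal p e (I ^ t) := by
  refine Ideal.span_le.mpr ?_
  rintro _ ⟨φ, hφ, y, hy, rfl⟩
  obtain ⟨n, f, g, hf, hsum⟩ := auxCartierDualBasis p hp hreg hFFS e he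
  have hyS : algebraMap R S y ∈ (I.map (algebraMap R S)) ^ r := by
    rw [← Ideal.map_pow]
    exact Ideal.mem_map_of_mem _ hy
  have hci : ∀ i, f i (algebraMap R S y) ∈ cartierIdeal p e ((I.map (algebraMap R S)) ^ t) :=
    fun i => by
      rw [← h]
      exact Ideal.subset_span ⟨f i, hf i, algebraMap R S y, hyS, rfl⟩
  have key : φ y = ∑ i, φ (β (g i * (f i (algebraMap R S y)) ^ p ^ e)) := by
    calc φ y = φ (β (∑ i, (f i (algebraMap R S y)) ^ p ^ e * g i)) := by
          rw [← hsum (algebraMap R S y), hβ]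
      _ = φ (∑ i, β ((f i (algebraMap R S y)) ^ p ^ e * g i)) := by rw [map_sum]
      _ = ∑ i, φ (β ((f i (algebraMap R S y)) ^ p ^ e * g i)) := auxCartierSum hφ _ _
      _ = ∑ i, φ (β (g i * (f i (algebraMap R S y)) ^ p ^ e)) :=
          Finset.sum_congr rfl fun i _ => by rw [mul_comm]
  show φ y ∈ cartierIdeal p e (I ^ t)
  rw [key]
  exact Ideal.sum_mem _ fun i _ => auxDescent p hp β I e t _ (hci i) (g i) φ hφ

/-- Lemma `LemmaEqCartier`.  Let `S` be a regular `F`-finite domain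
of characteristic `p > 0` and `R ⊆ S` an `F`-finite Noetherian subring such that the
inclusion splits `R`-linearly.  Let `I ⊆ R` be an ideal, `e ≥ 1` and `r, t ∈ ℕ`.
If `C^e_S (IS)^r = C^e_S (IS)^t`, then `C^e_R I^r = C^e_R I^t`. -/
theorem cartierIdeal_pow_eq_of_extension
    (p : ℕ) (hp : p.Prime)
    (S : Type*) [CommRing S] [IsDomain S] [IsNoetherianRing S] [CharP S p]
    (hreg : IsRegularKunz p S) (hFFS : IsFFinite p S)
    (R : Type*) [CommRing R] [IsNoetherianRing R] [CharP R p] (hFFR : IsFFinite p R)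
    [Algebra R S] (hRS : Function.Injective (algebraMap R S))
    (β : S →ₗ[R] R) (hβ : ∀ r : R, β (algebraMap R S r) = r)
    (I : Ideal R) (e : ℕ) (he : 1 ≤ e) (r t : ℕ)
    (h : cartierIdeal p e ((I.map (algebraMap R S)) ^ r) =
         cartierIdeal p e ((I.map (algebraMap R S)) ^ t)) :
    cartierIdeal p e (I ^ r) = cartierIdeal p e (I ^ t) := by
  exact le_antisymm
    (auxIncl p hp S hreg hFFS R β hβ I e he r t h)
    (auxIncl p hp S hreg hFFS R β hβ I e he t r h.symm)
end

section
/- Let S = ℚ[x₁,…,xₙ], I ⊆ S an ideal, and R = S/I. Let S_ℤ = ℤ[x₁,…,xₙ], J = I ∩ S_ℤ, and R_ℤ = S_ℤ/J, regarded as a subring of R. Then for every ℚ-linear differential operator δ ∈ D_{R|ℚ} there exists a positive integer c such that cδ(R_ℤ) ⊆ R_ℤ; furthermore, the restriction of cδ to R_ℤ is a ℤ-linear differential operator on R_ℤ, i.e., cδ|_{R_ℤ} ∈ D_{R_ℤ|ℤ}. -/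
/-!
Write `R_ℤ` as the image of `ℤ[x₁,…,xₙ]`. An operator of order `0` is multiplication by some
`r`, and some positive multiple of `r` lies in `R_ℤ`. For higher order, the Leibniz rule
`δ (xᵢ u) = [δ, xᵢ] u + xᵢ δ u` and induction on the order (for the commutators `[δ, xᵢ]`) show
that if `c₀ δ 1 ∈ R_ℤ` and `cᵢ [δ, xᵢ]` preserves `R_ℤ`, then `c₀ ∏ cᵢ • δ` preserves `R_ℤ`,
by induction on polynomials. The restriction of `c • δ` to the subring `R_ℤ` has as
commutators the restrictions of those of `c • δ`, hence the same order.
-/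

theorem AddMonoidHom.exists_semiconj_of_mapsTo_range {M N : Type*} [AddCommGroup M]
    [AddCommGroup N] {f : M →+ N} (hf : Function.Injective f) (ε : N →+ N)
    (h : ∀ x, ε (f x) ∈ f.range) :
    ∃ ε' : M →+ M, Function.Semiconj f ε' ε :=
  ⟨(AddMonoidHom.ofInjective hf).symm.toAddMonoidHom.comp ((ε.comp f).codRestrict f.range h),
    fun x => by simp⟩

open MvPolynomial

theorem MvPolynomial.exists_pos_nsmul_mem_range_map {σ : Type*} (p : MvPolynomial σ ℚ) :
    ∃ c : ℕ, 0 < c ∧ c • p ∈ (map (Int.castRingHom ℚ)).range := by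
  induction p using MvPolynomial.induction_on with
  | C a => exact ⟨a.den, a.den_pos, C a.num, by
    rw [map_C, ← map_nsmul, nsmul_eq_mul, Rat.den_mul_eq_num]
    simp⟩
  | add p q hp hq =>
    obtain ⟨c, hc, hcp⟩ := hp
    obtain ⟨d, hd, hdq⟩ := hq
    refine ⟨c * d, by positivity, ?_⟩
    have := add_mem (nsmul_mem hcp d) (nsmul_mem hdq c)
    rwa [smul_smul, smul_smul, mul_comm d c, ← smul_add] at this
  | mul_X p i hp =>
    obtain ⟨c, hc, q, hq⟩ := hp
    exact ⟨c, hc, q * X i, by rw [map_mul, map_X, hq, smul_mul_assoc]⟩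

section DiffOp

variable {A R S : Type*} [CommRing A] [CommRing R] [CommRing S]

theorem IsDiffOpOfOrder.nsmul [Algebra A R] :
    ∀ {m : ℕ} {δ : R →ₗ[A] R}, IsDiffOpOfOrder A m δ → ∀ c : ℕ, IsDiffOpOfOrder A m (c • δ)
  | 0, _, ⟨r, hr⟩, c => ⟨c • r, fun x => by simp [hr, mul_assoc]⟩
  | m + 1, δ, h, c => fun r => by
      convert (h r).nsmul c using 1
      ext x
      simp [smul_sub, mul_left_comm]

theorem IsDiffOpOfOrder.of_semiconj {B : Type*} [CommRing B] [Algebra A S] [Algebra B R]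
    {f : R →+* S} (hf : Function.Injective f) :
    ∀ {m : ℕ} {ε : S →ₗ[A] S} {ε' : R →ₗ[B] R},
      Function.Semiconj f ε' ε → IsDiffOpOfOrder A m ε → IsDiffOpOfOrder B m ε'
  | 0, ε, ε', hε, ⟨s, hs⟩ =>
    ⟨ε' 1, fun x => hf <| by rw [hε, hs, map_mul, hε, hs, map_one, mul_one]⟩
  | m + 1, _, _, hε, h => fun r => (h (f r)).of_semiconj hf fun x => by
      simp only [LinearMap.sub_apply, LinearMap.comp_apply, LinearMap.mulLeft_apply, map_sub,
        map_mul, hε.eq]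

theorem IsDiffOpOfOrder.exists_pos_nsmul_mem_range {ι : Type*} [Algebra A S] [Fintype ι]
    (g : MvPolynomial ι ℤ →+* S)
    (hg : ∀ y, ∃ c : ℕ, 0 < c ∧ c • y ∈ g.range) :
    ∀ {m : ℕ} {δ : S →ₗ[A] S}, IsDiffOpOfOrder A m δ →
      ∃ c : ℕ, 0 < c ∧ ∀ q, c • δ (g q) ∈ g.range
  | 0, δ, ⟨r, hr⟩ => by
    obtain ⟨c, hc, hcr⟩ := hg r
    exact ⟨c, hc, fun q => by simpa [hr, mul_assoc] using mul_mem hcr (g.mem_range_self q)⟩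
  | m + 1, δ, h => by
    obtain ⟨c₀, hc₀, hc₀δ⟩ := hg (δ 1)
    choose c hc hcδ using fun i => (h (g (X i))).exists_pos_nsmul_mem_range g hg
    refine ⟨c₀ * ∏ i, c i, Nat.mul_pos hc₀ (Finset.prod_pos fun i _ => hc i), fun q => ?_⟩
    induction q using MvPolynomial.induction_on with
    | C a =>
      have hC : δ (g (C a)) = a • δ 1 := by
        rw [← map_zsmul, zsmul_one]
        simp
      rw [hC, smul_comm, mul_comm, mul_smul]
      exact zsmul_mem (nsmul_mem hc₀δ _) a
    | add p q hp hq => simpa only [map_add, smul_add] using add_mem hp hq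
    | mul_X p i hp =>
      obtain ⟨k, hk⟩ : c i ∣ c₀ * ∏ i, c i :=
        dvd_mul_of_dvd_right (Finset.dvd_prod_of_mem c (Finset.mem_univ i)) c₀
      have hLeibniz : δ (g (p * X i)) =
          (δ ∘ₗ LinearMap.mulLeft A (g (X i)) - LinearMap.mulLeft A (g (X i)) ∘ₗ δ) (g p) +
            g (X i) * δ (g p) := by
        simp [mul_comm (g p)]
      rw [hLeibniz, smul_add, ← mul_smul_comm]
      refine add_mem ?_ (mul_mem (g.mem_range_self _) hp)
      rw [hk, mul_comm, mul_smul]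
      exact nsmul_mem (hcδ i p) k

end DiffOp

/-- Lemma `LemmaClearCoef`.  Let `S = ℚ[x₁,…,xₙ]`, `I ⊆ S` an ideal
and `R = S/I`; let `S_ℤ = ℤ[x₁,…,xₙ]`, `J = I ∩ S_ℤ` and `R_ℤ = S_ℤ/J ⊆ R`.  Then for
every `δ ∈ D_{R|ℚ}` there is a positive integer `c` with `cδ(R_ℤ) ⊆ R_ℤ`, and the
restriction of `cδ` to `R_ℤ` is a `ℤ`-linear differential operator on `R_ℤ`. -/
theorem clear_denominators_of_diffOp
    (n : ℕ) (I : Ideal (MvPolynomial (Fin n) ℚ))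
    (δ : (MvPolynomial (Fin n) ℚ ⧸ I) →ₗ[ℚ] (MvPolynomial (Fin n) ℚ ⧸ I))
    (hδ : IsDiffOp ℚ δ) :
    ∃ c : ℕ, 0 < c ∧
      ∃ δ' : (MvPolynomial (Fin n) ℤ ⧸
            (I.comap (MvPolynomial.map (Int.castRingHom ℚ)))) →ₗ[ℤ]
          (MvPolynomial (Fin n) ℤ ⧸ (I.comap (MvPolynomial.map (Int.castRingHom ℚ)))),
        IsDiffOp ℤ δ' ∧
        ∀ x : MvPolynomial (Fin n) ℤ ⧸ (I.comap (MvPolynomial.map (Int.castRingHom ℚ))),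
          Ideal.quotientMap I (MvPolynomial.map (Int.castRingHom ℚ)) le_rfl (δ' x) =
            c • δ (Ideal.quotientMap I (MvPolynomial.map (Int.castRingHom ℚ)) le_rfl x) := by
  obtain ⟨m, hm⟩ := hδ
  set φ := Ideal.quotientMap I (map (Int.castRingHom ℚ)) le_rfl
  have hφ : Function.Injective φ := Ideal.quotientMap_injective
  set g := φ.comp (Ideal.Quotient.mk _)
  have hg : ∀ y, ∃ c : ℕ, 0 < c ∧ c • y ∈ g.range := by
    intro y
    obtain ⟨p, rfl⟩ := Ideal.Quotient.mk_surjective y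
    obtain ⟨c, hc, q, hq⟩ := p.exists_pos_nsmul_mem_range_map
    exact ⟨c, hc, q, by simp [g, φ, hq]⟩
  obtain ⟨c, hc, hcδ⟩ := hm.exists_pos_nsmul_mem_range g hg
  obtain ⟨δ', hδ'⟩ := AddMonoidHom.exists_semiconj_of_mapsTo_range (f := φ.toAddMonoidHom) hφ
    (c • δ).toAddMonoidHom fun x => by
      obtain ⟨q, rfl⟩ := Ideal.Quotient.mk_surjective x
      obtain ⟨z, hz⟩ := hcδ q
      exact ⟨Ideal.Quotient.mk _ z, hz⟩
  exact ⟨c, hc, δ'.toIntLinearMap,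
    ⟨m, (hm.nsmul c).of_semiconj (ε := c • δ) (ε' := δ'.toIntLinearMap) hφ hδ'⟩, hδ'⟩
end
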